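/- arXiv:1608.04685 — 2 statements merged into one kernel-verified Lean document; each statement's English description precedes it below -/
import Mathlib

section
/- For every κ > 0, the modulational instability index Δ(κ) = i₁(κ)·i₂(κ)·i₄(κ)/i₃(κ) is well defined (i₃(κ) ≠ 0) and has the same sign as i₄(κ): Δ(κ) < 0 if and only if i₄(κ) < 0, Δ(κ) > 0 if and only if i₄(κ) > 0, and Δ(κ) = 0 if and only if i₄(κ) = 0. -/
/-- The water-wave phase speed `c_ww(k) = √(tanh k / k)` (normalized depth and gravity),
extended by `c_ww(0) = 1`. -/
noncomputable def cww (k : ℝ) : ℝ := if k = 0 then 1 else Real.sqrt (Real.tanh k / k)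

/-- `i₁(κ) = (κ c_ww(κ))''`. -/
noncomputable def i1 (κ : ℝ) : ℝ := deriv (deriv (fun k : ℝ => k * cww k)) κ

/-- `i₂(κ) = ((κ c_ww(κ))')² − 1`. -/
noncomputable def i2 (κ : ℝ) : ℝ := (deriv (fun k : ℝ => k * cww k) κ) ^ 2 - 1

/-- `i₃(κ) = c_ww²(κ) − c_ww²(2κ)`. -/
noncomputable def i3 (κ : ℝ) : ℝ := (cww κ) ^ 2 - (cww (2 * κ)) ^ 2

/-- `i₄(κ) = 3c_ww²(κ) + 5c_ww⁴(κ) − 2c_ww²(2κ)(c_ww²(κ)+2) + 18κ c_ww³(κ) c_ww'(κ)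
+ κ²(c_ww'(κ))²(5c_ww²(κ) + 4c_ww²(2κ))`. -/
noncomputable def i4 (κ : ℝ) : ℝ :=
  3 * (cww κ) ^ 2 + 5 * (cww κ) ^ 4 - 2 * (cww (2 * κ)) ^ 2 * ((cww κ) ^ 2 + 2)
    + 18 * κ * (cww κ) ^ 3 * deriv cww κ
    + κ ^ 2 * (deriv cww κ) ^ 2 * (5 * (cww κ) ^ 2 + 4 * (cww (2 * κ)) ^ 2)

/-- The modulational instability index `Δ(κ) = i₁(κ)·i₂(κ)·i₄(κ)/i₃(κ)`. -/
noncomputable def Δ (κ : ℝ) : ℝ := i1 κ * i2 κ / i3 κ * i4 κ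

/-!
Write `κ c_ww(κ) = √g(κ)` with `g(κ) = κ tanh κ`, and put `t = tanh κ`, `s = sech² κ = 1 - t²`.
Then `i₁` has the sign of `2 g g'' - g'² = -(t - κ s)² - 4 κ² t² s < 0`; `i₂ < 0` says `g'² < 4 g`,
which follows from `κ s < t < κ`; and `i₃ > 0` because `tanh 2κ = 2t / (1 + t²) < 2t`.
So `Δ(κ)` is `i₄(κ)` times the positive number `i₁ i₂ / i₃`.
-/

open Real Topology

namespace Real

theorem hasDerivAt_tanh (x : ℝ) : HasDerivAt tanh (1 - tanh x ^ 2) x := by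
  have hc := (cosh_pos x).ne'
  have h : HasDerivAt (fun y => sinh y / cosh y) _ x :=
    (hasDerivAt_sinh x).div (hasDerivAt_cosh x) hc
  rw [← funext tanh_eq_sinh_div_cosh] at h
  refine h.congr_deriv ?_
  rw [tanh_eq_sinh_div_cosh]
  field_simp

theorem tanh_pos {x : ℝ} (hx : 0 < x) : 0 < tanh x := by
  rw [tanh_eq_sinh_div_cosh]
  exact div_pos (sinh_pos_iff.mpr hx) (cosh_pos x)

theorem tanh_lt_self {x : ℝ} (hx : 0 < x) : tanh x < x := by
  obtain ⟨c, hc, hslope⟩ := exists_hasDerivAt_eq_slope tanh (fun y => 1 - tanh y ^ 2) hx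
    (fun y _ => (hasDerivAt_tanh y).continuousAt.continuousWithinAt) fun y _ => hasDerivAt_tanh y
  rw [tanh_zero, sub_zero, sub_zero, eq_div_iff hx.ne'] at hslope
  nlinarith [mul_pos (pow_pos (tanh_pos hc.1) 2) hx]

theorem mul_one_sub_tanh_sq_lt_tanh {x : ℝ} (hx : 0 < x) : x * (1 - tanh x ^ 2) < tanh x := by
  -- `1 - tanh² x = 1 / cosh² x`, so this is `2x < sinh 2x`.
  have h2x : 2 * x < sinh (2 * x) := self_lt_sinh_iff.mpr (by linarith)
  have hc := (cosh_pos x).ne'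
  rw [sinh_two_mul] at h2x
  rw [tanh_eq_sinh_div_cosh, ← sub_pos]
  field_simp
  nlinarith [cosh_sq_sub_sinh_sq x]

theorem tanh_two_mul (x : ℝ) : tanh (2 * x) = 2 * tanh x / (1 + tanh x ^ 2) := by
  have hc := (cosh_pos x).ne'
  rw [tanh_eq_sinh_div_cosh, tanh_eq_sinh_div_cosh, sinh_two_mul, cosh_two_mul]
  field_simp

end Real

theorem hasDerivAt_deriv_sqrt {g g' : ℝ → ℝ} {x g'' : ℝ}
    (hg : ∀ᶠ y in 𝓝 x, HasDerivAt g (g' y) y) (hg' : HasDerivAt g' g'' x) (hx : 0 < g x) :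
    HasDerivAt (deriv fun y => √(g y))
      ((2 * g x * g'' - g' x ^ 2) / (4 * g x * √(g x))) x := by
  have hgx := hg.self_of_nhds
  have hpos : ∀ᶠ y in 𝓝 x, 0 < g y := hgx.continuousAt.eventually (lt_mem_nhds hx)
  have hderiv : (deriv fun y => √(g y)) =ᶠ[𝓝 x] fun y => g' y / (2 * √(g y)) := by
    filter_upwards [hg, hpos] with y hy hy0
    exact (hy.sqrt hy0.ne').deriv
  have hs := sqrt_pos.mpr hx
  refine ((hg'.div ((hgx.sqrt hx.ne').const_mul 2) (by positivity)).congr_of_eventuallyEq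
    hderiv).congr_deriv ?_
  field_simp
  rw [sq_sqrt hx.le]
  ring

theorem mul_cww_eventuallyEq {κ : ℝ} (hκ : 0 < κ) :
    (fun k => k * cww k) =ᶠ[𝓝 κ] fun k => √(k * tanh k) := by
  filter_upwards [Ioi_mem_nhds hκ] with k (hk : 0 < k)
  rw [cww, if_neg hk.ne', show k * tanh k = k ^ 2 * (tanh k / k) by field_simp,
    sqrt_mul (sq_nonneg k), sqrt_sq hk.le]

theorem cww_sq {k : ℝ} (hk : 0 < k) : cww k ^ 2 = tanh k / k := by
  rw [cww, if_neg hk.ne']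
  exact sq_sqrt (div_nonneg (tanh_pos hk).le hk.le)

theorem hasDerivAt_mul_tanh (k : ℝ) :
    HasDerivAt (fun k => k * tanh k) (tanh k + k * (1 - tanh k ^ 2)) k :=
  ((hasDerivAt_id' k).mul (hasDerivAt_tanh k)).congr_deriv (by ring)

theorem hasDerivAt_tanh_add_mul_one_sub_tanh_sq (k : ℝ) :
    HasDerivAt (fun k => tanh k + k * (1 - tanh k ^ 2))
      (2 * (1 - tanh k ^ 2) * (1 - k * tanh k)) k :=
  ((hasDerivAt_tanh k).add ((hasDerivAt_id' k).mul
    (((hasDerivAt_tanh k).fun_pow 2).const_sub 1))).congr_deriv (by ring)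

theorem deriv_mul_cww {κ : ℝ} (hκ : 0 < κ) :
    deriv (fun k => k * cww k) κ =
      (tanh κ + κ * (1 - tanh κ ^ 2)) / (2 * √(κ * tanh κ)) := by
  rw [(mul_cww_eventuallyEq hκ).deriv_eq]
  exact ((hasDerivAt_mul_tanh κ).sqrt (mul_pos hκ (tanh_pos hκ)).ne').deriv

theorem i1_eq {κ : ℝ} (hκ : 0 < κ) :
    i1 κ = (2 * (κ * tanh κ) * (2 * (1 - tanh κ ^ 2) * (1 - κ * tanh κ))
      - (tanh κ + κ * (1 - tanh κ ^ 2)) ^ 2) / (4 * (κ * tanh κ) * √(κ * tanh κ)) := by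
  rw [i1, (mul_cww_eventuallyEq hκ).deriv.deriv_eq]
  exact (hasDerivAt_deriv_sqrt (g := fun k => k * tanh k) (.of_forall hasDerivAt_mul_tanh)
    (hasDerivAt_tanh_add_mul_one_sub_tanh_sq κ) (mul_pos hκ (tanh_pos hκ))).deriv

theorem i1_neg {κ : ℝ} (hκ : 0 < κ) : i1 κ < 0 := by
  rw [i1_eq hκ]
  have ht := tanh_pos hκ
  have hs : 0 < 1 - tanh κ ^ 2 := sub_pos.mpr (tanh_sq_lt_one κ)
  refine div_neg_of_neg_of_pos ?_ (by positivity)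
  nlinarith [sq_nonneg (tanh κ - κ * (1 - tanh κ ^ 2)), mul_pos (mul_pos hκ ht) hs]

theorem i2_neg {κ : ℝ} (hκ : 0 < κ) : i2 κ < 0 := by
  have ht := tanh_pos hκ
  have hg := mul_pos hκ ht
  have hs : 0 < 1 - tanh κ ^ 2 := sub_pos.mpr (tanh_sq_lt_one κ)
  have hkey : (tanh κ + κ * (1 - tanh κ ^ 2)) ^ 2 < 4 * (κ * tanh κ) := by
    have := mul_one_sub_tanh_sq_lt_tanh hκ
    nlinarith [tanh_lt_self hκ, mul_pos hκ hs]
  rw [i2, deriv_mul_cww hκ, div_pow, mul_pow, sq_sqrt hg.le, sub_neg, div_lt_one (by positivity)]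
  linarith

theorem i3_pos {κ : ℝ} (hκ : 0 < κ) : 0 < i3 κ := by
  have ht := tanh_pos hκ
  rw [i3, cww_sq hκ, cww_sq (by positivity), tanh_two_mul, sub_pos,
    div_lt_div_iff₀ (by positivity) hκ]
  field_simp
  nlinarith [pow_pos ht 3]

/-- For every `κ > 0`, the modulational instability index `Δ(κ)` is well defined
(`i₃(κ) ≠ 0`) and has the same sign as `i₄(κ)`. -/
theorem Delta_sign (κ : ℝ) (hκ : 0 < κ) :
    i3 κ ≠ 0 ∧
    (Δ κ < 0 ↔ i4 κ < 0) ∧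
    (0 < Δ κ ↔ 0 < i4 κ) ∧
    (Δ κ = 0 ↔ i4 κ = 0) := by
  have hP : 0 < i1 κ * i2 κ / i3 κ :=
    div_pos (mul_pos_of_neg_of_neg (i1_neg hκ) (i2_neg hκ)) (i3_pos hκ)
  refine ⟨(i3_pos hκ).ne', ?_, mul_pos_iff_of_pos_left hP, mul_eq_zero_iff_left hP.ne'⟩
  simpa [Δ, mul_neg] using mul_pos_iff_of_pos_left hP (b := -i4 κ)
end

section
/- Let κ > 0 and define ω(s,±) = s·(c_ww(κ) ± c_ww(κ s)) with c_ww extended evenly. Then for all integers n₁, n₂ with |n₁ − n₂| = 1 and all ξ ∈ (0, 1/2], ω(n₁+ξ, −) ≠ ω(n₂+ξ, +); that is, eigenvalues of the '−' and '+' branches of the linearization about the rest state never collide for adjacent Fourier modes. -/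
/-!
Writing `f(s) = s·c_ww(κ s)`, we have `ω(s, ±) = s·c_ww(κ) ± f(s)` and `f(1) = c_ww(κ)`, so a collision
`ω(s+1, −) = ω(s, +)` says `f(s+1) + f(s) = f(1) + f(0)`, and `ω(s, −) = ω(s+1, +)` says
`f(s+1) + f(s) = f(0) + f(-1)`. For `s > 0` one has `f(s) = √(s tanh(κ s) / κ)`, so the odd function
`f` is strictly increasing, hence so is `s ↦ f(s+1) + f(s)`. A collision therefore forces
`s = n + ξ ∈ {0, -1}`, impossible for `0 < ξ < 1`.
-/

open Real

theorem Real.strictMono_tanh : StrictMono tanh := fun a b hab => by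
  rwa [← artanh_lt_artanh_iff ⟨neg_one_lt_tanh a, tanh_lt_one a⟩ ⟨neg_one_lt_tanh b, tanh_lt_one b⟩,
    artanh_tanh, artanh_tanh]

theorem Real.tanh_pos_s11 {x : ℝ} (hx : 0 < x) : 0 < tanh x := by
  simpa using strictMono_tanh hx

theorem cww_neg (k : ℝ) : cww (-k) = cww k := by
  rcases eq_or_ne k 0 with rfl | hk
  · simp
  · rw [cww, cww, if_neg (neg_ne_zero.mpr hk), if_neg hk, tanh_neg, neg_div_neg_eq]

theorem cww_pos (k : ℝ) : 0 < cww k := by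
  rcases lt_trichotomy k 0 with hk | rfl | hk
  · rw [← cww_neg, cww, if_neg (by linarith)]
    exact sqrt_pos.mpr (div_pos (tanh_pos_s11 (by linarith)) (by linarith))
  · simp [cww]
  · rw [cww, if_neg hk.ne']
    exact sqrt_pos.mpr (div_pos (tanh_pos_s11 hk) hk)

section Dispersion

variable {κ : ℝ}

theorem mul_cww_mul_eq_sqrt (hκ : 0 < κ) {s : ℝ} (hs : 0 < s) :
    s * cww (κ * s) = √(s * tanh (κ * s) / κ) := by
  have hsq : s * tanh (κ * s) / κ = s ^ 2 * (tanh (κ * s) / (κ * s)) := by field_simp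
  rw [cww, if_neg (by positivity), hsq, sqrt_mul (sq_nonneg s), sqrt_sq hs.le]

theorem neg_mul_cww_mul_neg (s : ℝ) : -s * cww (κ * -s) = -(s * cww (κ * s)) := by
  rw [mul_neg, cww_neg, neg_mul]

theorem strictMono_mul_cww_mul (hκ : 0 < κ) : StrictMono fun s => s * cww (κ * s) := by
  refine strictMono_of_odd_strictMonoOn_nonneg neg_mul_cww_mul_neg fun a ha b _ hab => ?_
  have hb : 0 < b := lt_of_le_of_lt ha hab
  rcases (Set.mem_Ici.mp ha).eq_or_lt with rfl | ha
  · simpa using mul_pos hb (cww_pos (κ * b))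
  · simp only [mul_cww_mul_eq_sqrt hκ ha, mul_cww_mul_eq_sqrt hκ hb]
    have htanh : tanh (κ * a) < tanh (κ * b) := strictMono_tanh (by gcongr)
    have htanh_pos : 0 < tanh (κ * a) := tanh_pos_s11 (mul_pos hκ ha)
    refine sqrt_lt_sqrt (by positivity) (div_lt_div_of_pos_right ?_ hκ)
    exact mul_lt_mul'' hab htanh ha.le htanh_pos.le

theorem strictMono_mul_cww_mul_add_succ (hκ : 0 < κ) :
    StrictMono fun s => (s + 1) * cww (κ * (s + 1)) + s * cww (κ * s) := fun _ _ hab =>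
  add_lt_add (strictMono_mul_cww_mul hκ (by linarith)) (strictMono_mul_cww_mul hκ hab)

theorem eq_zero_of_collision_succ_minus_plus (hκ : 0 < κ) {s : ℝ}
    (h : (s + 1) * (cww κ - cww (κ * (s + 1))) = s * (cww κ + cww (κ * s))) : s = 0 :=
  (strictMono_mul_cww_mul_add_succ hκ).injective <| by
    simp only [zero_add, one_mul, mul_one, zero_mul]
    linear_combination -h

theorem eq_neg_one_of_collision_minus_succ_plus (hκ : 0 < κ) {s : ℝ}
    (h : s * (cww κ - cww (κ * s)) = (s + 1) * (cww κ + cww (κ * (s + 1)))) : s = -1 :=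
  (strictMono_mul_cww_mul_add_succ hκ).injective <| by
    simp only [neg_add_cancel, zero_mul, zero_add, mul_neg, mul_one, cww_neg, neg_mul, one_mul]
    linear_combination -h

end Dispersion

theorem intCast_add_ne_intCast {n m : ℤ} {ξ : ℝ} (h0 : 0 < ξ) (h1 : ξ < 1) : (n : ℝ) + ξ ≠ m := by
  intro h
  have hbetween : (0 : ℝ) < ((m - n : ℤ) : ℝ) ∧ ((m - n : ℤ) : ℝ) < 1 := by
    push_cast
    constructor <;> linarith
  norm_cast at hbetween
  omega

/-- For `κ > 0` and `ω(s,±) = s(c_ww(κ) ± c_ww(κ s))`, eigenvalues of the '−' and '+'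
branches of the linearization about the rest state never collide for adjacent Fourier modes:
for all integers `n₁, n₂` with `|n₁ − n₂| = 1` and all `ξ ∈ (0, 1/2]`,
`ω(n₁+ξ, −) ≠ ω(n₂+ξ, +)`. -/
theorem no_adjacent_collision (κ : ℝ) (hκ : 0 < κ) (n₁ n₂ : ℤ) (hn : |n₁ - n₂| = 1)
    (ξ : ℝ) (hξ : ξ ∈ Set.Ioc (0 : ℝ) (1 / 2)) :
    ((n₁ : ℝ) + ξ) * (cww κ - cww (κ * ((n₁ : ℝ) + ξ)))
      ≠ ((n₂ : ℝ) + ξ) * (cww κ + cww (κ * ((n₂ : ℝ) + ξ))) := by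
  obtain ⟨hξ0, hξ1⟩ := hξ
  intro h
  rcases abs_eq (zero_le_one' ℤ) |>.mp hn with hn | hn
  · have hn : (n₁ : ℝ) + ξ = n₂ + ξ + 1 := by rw [eq_add_of_sub_eq hn]; push_cast; ring
    rw [hn] at h
    exact intCast_add_ne_intCast (m := 0) hξ0 (by linarith)
      (by simpa using eq_zero_of_collision_succ_minus_plus hκ h)
  · have hn : (n₂ : ℝ) + ξ = n₁ + ξ + 1 := by rw [eq_add_of_sub_eq' hn]; push_cast; ring
    rw [hn] at h
    exact intCast_add_ne_intCast (m := -1) hξ0 (by linarith)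
      (by simpa using eq_neg_one_of_collision_minus_succ_plus hκ h)
end
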